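/- Let 0 ≤ k ≤ n be integers. For every T ∈ {n;k} there exists a unique S ∈ {n;k} with Out(S) = ∅ and T ≤_adm S; explicitly, S is given by s_i = t_i + 1 for i ∈ Out(T) and s_i = t_i for i ∉ Out(T). -/
import Mathlib


open scoped BigOperators

/-- `{n;k}`: the set of subsets of `{1,…,n}` of cardinality `k`. -/
def Sset (n k : ℕ) : Finset (Finset ℕ) := (Finset.Icc 1 n).powersetCard k

/-- `elt S r` is `s_r`, the `r`-th smallest element of `S` (1-indexed); junk value `0` out of range. -/
def elt (S : Finset ℕ) (r : ℕ) : ℕ := (S.sort (· ≤ ·)).getD (r - 1) 0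

/-- `s_{r+1}`, with the convention `s_{k+1} = n+1`. -/
def nxt (n : ℕ) (S : Finset ℕ) (r : ℕ) : ℕ := if r = S.card then n + 1 else elt S (r + 1)

/-- `s_{r-1}`, with the convention `s_0 = 0`. -/
def prv (S : Finset ℕ) (r : ℕ) : ℕ := if r = 1 then 0 else elt S (r - 1)

/-- `S_r`: the set obtained from `S` by replacing `s_r` with `s_r + 1`. -/
def Sr (S : Finset ℕ) (r : ℕ) : Finset ℕ := insert (elt S r + 1) (S.erase (elt S r))

/-- `In(S) = {i ∈ {1,…,k} : s_i ≡ k (mod 2) and s_{i−1} < s_i − 1}` (convention `s_0 = 0`). -/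
def InS (k : ℕ) (S : Finset ℕ) : Finset ℕ :=
  (Finset.Icc 1 k).filter fun i => elt S i % 2 = k % 2 ∧ prv S i + 1 < elt S i

/-- `Out(S) = {i ∈ {1,…,k} : s_i ≢ k (mod 2) and s_i + 1 < s_{i+1}}` (convention `s_{k+1} = n+1`). -/
def OutS (n k : ℕ) (S : Finset ℕ) : Finset ℕ :=
  (Finset.Icc 1 k).filter fun i => ¬ (elt S i % 2 = k % 2) ∧ elt S i + 1 < nxt n S i

/-- An elementary admissible step `S ⋖ S_r`, for `1 ≤ r ≤ k` with `s_{r+1} − s_r > 1`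
and `k − s_r` odd. -/
def AdmStep (n k : ℕ) (S T : Finset ℕ) : Prop :=
  ∃ r, 1 ≤ r ∧ r ≤ k ∧ 1 < nxt n S r - elt S r ∧ Odd ((k : ℤ) - elt S r) ∧ T = Sr S r

/-- The admissible order `≤_adm`: the reflexive-transitive closure of elementary steps. -/
def AdmLE (n k : ℕ) (S T : Finset ℕ) : Prop := Relation.ReflTransGen (AdmStep n k) S T

lemma mem_Sset {n k : ℕ} {S : Finset ℕ} :
    S ∈ Sset n k ↔ S ⊆ Finset.Icc 1 n ∧ S.card = k := Finset.mem_powersetCard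

lemma elt_orderEmb {S : Finset ℕ} {k : ℕ} (hc : S.card = k) {r : ℕ} (h1 : 1 ≤ r) (h2 : r ≤ k) :
    elt S r = S.orderEmbOfFin hc ⟨r - 1, by omega⟩ := by
  rw [Finset.orderEmbOfFin_apply, elt]
  exact List.getD_eq_getElem _ _ (by rw [Finset.length_sort, hc]; omega)

lemma elt_mem {n k : ℕ} {S : Finset ℕ} (hS : S ∈ Sset n k) {r : ℕ} (h1 : 1 ≤ r) (h2 : r ≤ k) :
    elt S r ∈ S := by
  rw [elt_orderEmb (mem_Sset.1 hS).2 h1 h2]; exact Finset.orderEmbOfFin_mem ..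

lemma elt_bounds {n k : ℕ} {S : Finset ℕ} (hS : S ∈ Sset n k) {r : ℕ} (h1 : 1 ≤ r) (h2 : r ≤ k) :
    1 ≤ elt S r ∧ elt S r ≤ n := by
  have := (mem_Sset.1 hS).1 (elt_mem hS h1 h2)
  exact Finset.mem_Icc.1 this

lemma elt_lt {S : Finset ℕ} {k : ℕ} (hc : S.card = k) {i j : ℕ}
    (h1 : 1 ≤ i) (hij : i < j) (h2 : j ≤ k) : elt S i < elt S j := by
  rw [elt_orderEmb hc h1 (by omega), elt_orderEmb hc (by omega) h2]
  exact (S.orderEmbOfFin hc).strictMono (by simp [Fin.lt_def]; omega)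

lemma elt_le {S : Finset ℕ} {k : ℕ} (hc : S.card = k) {i j : ℕ}
    (h1 : 1 ≤ i) (hij : i ≤ j) (h2 : j ≤ k) : elt S i ≤ elt S j := by
  rcases eq_or_lt_of_le hij with rfl | h
  · exact le_refl _
  · exact (elt_lt hc h1 h h2).le

lemma exists_elt {n k : ℕ} {S : Finset ℕ} (hS : S ∈ Sset n k) {a : ℕ} (ha : a ∈ S) :
    ∃ i, 1 ≤ i ∧ i ≤ k ∧ elt S i = a := by
  have hc := (mem_Sset.1 hS).2
  have : a ∈ Set.range (S.orderEmbOfFin hc) := by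
    rw [Finset.range_orderEmbOfFin]; exact ha
  obtain ⟨x, hx⟩ := this
  refine ⟨x + 1, by omega, by omega, ?_⟩
  rw [elt_orderEmb hc (by omega) (by omega), ← hx]
  congr 1

lemma image_spec {n k : ℕ} (g : ℕ → ℕ)
    (hmono : ∀ i j, 1 ≤ i → i < j → j ≤ k → g i < g j)
    (hbd : ∀ i, 1 ≤ i → i ≤ k → 1 ≤ g i ∧ g i ≤ n) :
    (Finset.Icc 1 k).image g ∈ Sset n k ∧
      ∀ i, 1 ≤ i → i ≤ k → elt ((Finset.Icc 1 k).image g) i = g i := by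
  set S := (Finset.Icc 1 k).image g with hSdef
  have hinj : Set.InjOn g (Finset.Icc 1 k) := by
    intro i hi j hj hgij
    simp only [Finset.coe_Icc, Set.mem_Icc] at hi hj
    rcases lt_trichotomy i j with h | h | h
    · exact absurd hgij (hmono i j hi.1 h hj.2).ne
    · exact h
    · exact absurd hgij.symm (hmono j i hj.1 h hi.2).ne
  have hcard : S.card = k := by
    rw [hSdef, Finset.card_image_of_injOn hinj, Nat.card_Icc]; omega
  have hsub : S ⊆ Finset.Icc 1 n := by
    intro a haS
    obtain ⟨i, hi, rfl⟩ := Finset.mem_image.1 haS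
    rw [Finset.mem_Icc] at hi ⊢
    exact hbd i hi.1 hi.2
  have hmem : S ∈ Sset n k := mem_Sset.2 ⟨hsub, hcard⟩
  refine ⟨hmem, ?_⟩
  have hfs : ∀ x : Fin k, g (x + 1) ∈ S := fun x =>
    Finset.mem_image.2 ⟨x + 1, Finset.mem_Icc.2 ⟨by omega, by omega⟩, rfl⟩
  have hsm : StrictMono (fun x : Fin k => g (x + 1)) := by
    intro x y hxy
    exact hmono _ _ (by omega) (by omega) (by omega)
  have heq := Finset.orderEmbOfFin_unique hcard hfs hsm
  intro i h1 h2
  rw [elt_orderEmb hcard h1 h2, ← congrFun heq ⟨i - 1, by omega⟩]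
  simp only []
  congr 1
  omega

lemma image_elt {n k : ℕ} {S : Finset ℕ} (hS : S ∈ Sset n k) :
    (Finset.Icc 1 k).image (elt S) = S := by
  ext a
  simp only [Finset.mem_image, Finset.mem_Icc]
  constructor
  · rintro ⟨i, hi, rfl⟩; exact elt_mem hS hi.1 hi.2
  · intro ha; obtain ⟨i, h1, h2, h3⟩ := exists_elt hS ha; exact ⟨i, ⟨h1, h2⟩, h3⟩


lemma mem_OutS {n k i : ℕ} {S : Finset ℕ} :
    i ∈ OutS n k S ↔ (1 ≤ i ∧ i ≤ k) ∧ ¬(elt S i % 2 = k % 2) ∧ elt S i + 1 < nxt n S i := by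
  simp [OutS, Finset.mem_filter, Finset.mem_Icc]

lemma nxt_eq {n k : ℕ} {S : Finset ℕ} (hS : S ∈ Sset n k) (i : ℕ) :
    nxt n S i = if i = k then n + 1 else elt S (i + 1) := by
  rw [nxt, (mem_Sset.1 hS).2]

/-- The bumped function for a single step at `r`. -/
lemma Sr_spec {n k r : ℕ} {S : Finset ℕ} (hS : S ∈ Sset n k) (hr1 : 1 ≤ r) (hr2 : r ≤ k)
    (hgap : elt S r + 1 < nxt n S r) :
    Sr S r ∈ Sset n k ∧
      (∀ i, 1 ≤ i → i ≤ k → elt (Sr S r) i = if i = r then elt S r + 1 else elt S i) := by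
  have hc := (mem_Sset.1 hS).2
  set g' : ℕ → ℕ := fun i => if i = r then elt S r + 1 else elt S i with hg'
  have hgap' : r < k → elt S r + 1 < elt S (r + 1) := by
    intro h; rw [nxt_eq hS, if_neg (by omega)] at hgap; exact hgap
  have hbd : ∀ i, 1 ≤ i → i ≤ k → 1 ≤ g' i ∧ g' i ≤ n := by
    intro i h1 h2
    have hb := elt_bounds hS h1 h2
    by_cases hi : i = r
    · subst hi
      simp only [hg', if_pos rfl]
      rcases eq_or_lt_of_le hr2 with rfl | h
      · rw [nxt_eq hS, if_pos rfl] at hgap; omega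
      · have := hgap' h
        have := (elt_bounds hS (by omega) (by omega) : _ ∧ elt S (i+1) ≤ n).2
        omega
    · simp only [hg', if_neg hi]; exact hb
  have hmono : ∀ i j, 1 ≤ i → i < j → j ≤ k → g' i < g' j := by
    intro i j h1 hij h2
    simp only [hg']
    by_cases hi : i = r
    · subst hi
      rw [if_pos rfl, if_neg (by omega)]
      have h3 := hgap' (by omega)
      have h4 : elt S (i + 1) ≤ elt S j := elt_le hc (by omega) (by omega) h2
      omega
    · rw [if_neg hi]
      by_cases hj : j = r
      · subst hj
        rw [if_pos rfl]
        have := elt_lt hc h1 hij h2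
        omega
      · rw [if_neg hj]; exact elt_lt hc h1 hij h2
  have hkey := image_spec (n := n) g' hmono hbd
  have hset : Sr S r = (Finset.Icc 1 k).image g' := by
    ext a
    simp only [Sr, Finset.mem_insert, Finset.mem_erase, Finset.mem_image, Finset.mem_Icc]
    constructor
    · rintro (rfl | ⟨hne, haS⟩)
      · exact ⟨r, ⟨hr1, hr2⟩, by simp [hg']⟩
      · obtain ⟨i, h1, h2, rfl⟩ := exists_elt hS haS
        have hir : i ≠ r := fun h => hne (by rw [h])
        exact ⟨i, ⟨h1, h2⟩, by simp [hg', hir]⟩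
    · rintro ⟨i, ⟨h1, h2⟩, rfl⟩
      by_cases hi : i = r
      · subst hi; simp [hg']
      · right
        simp only [hg', if_neg hi]
        refine ⟨?_, elt_mem hS h1 h2⟩
        intro h
        rcases lt_trichotomy i r with hlt | heq | hgt
        · exact absurd h (elt_lt hc h1 hlt hr2).ne
        · exact hi heq
        · exact absurd h.symm (elt_lt hc hr1 hgt h2).ne
  rw [hset]
  exact ⟨hkey.1, hkey.2⟩

lemma Out_Sr {n k r : ℕ} {S : Finset ℕ} (hS : S ∈ Sset n k) (hr : r ∈ OutS n k S) :
    Sr S r ∈ Sset n k ∧ OutS n k (Sr S r) = (OutS n k S).erase r := by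
  have hc := (mem_Sset.1 hS).2
  obtain ⟨⟨hr1, hr2⟩, hpar, hgap⟩ := mem_OutS.1 hr
  obtain ⟨hmem, helt⟩ := Sr_spec hS hr1 hr2 hgap
  refine ⟨hmem, ?_⟩
  ext i
  rw [mem_OutS, Finset.mem_erase, mem_OutS]
  by_cases hi : 1 ≤ i ∧ i ≤ k
  · obtain ⟨h1, h2⟩ := hi
    rw [helt i h1 h2, nxt_eq hmem, nxt_eq hS]
    by_cases hik : i = k
    · subst hik
      rw [if_pos rfl, if_pos rfl]
      by_cases hir : i = r
      · subst hir
        rw [if_pos rfl]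
        constructor
        · intro h; omega
        · intro h; omega
      · rw [if_neg hir]; tauto
    · rw [if_neg hik, if_neg hik, helt (i+1) (by omega) (by omega)]
      by_cases hir : i = r
      · subst hir
        rw [if_pos rfl, if_neg (by omega : ¬ i + 1 = i)]
        constructor
        · intro h; omega
        · intro h; omega
      · rw [if_neg hir]
        by_cases hir' : i + 1 = r
        · subst hir'
          rw [if_pos rfl]
          have hlt : elt S i < elt S (i + 1) := elt_lt hc h1 (by omega) (by omega)
          constructor
          · rintro ⟨hA, hp, hg⟩
            exact ⟨by omega, hA, hp, by omega⟩
          · rintro ⟨hne, hA, hp, hg⟩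
            exact ⟨hA, hp, by omega⟩
        · rw [if_neg hir']; tauto
  · constructor
    · rintro ⟨h, _⟩; omega
    · rintro ⟨_, h, _⟩; omega

/-- The target set: bump each `Out` index by one. -/
def FT (n k : ℕ) (S : Finset ℕ) : Finset ℕ :=
  (Finset.Icc 1 k).image fun i => if i ∈ OutS n k S then elt S i + 1 else elt S i

lemma FT_mem {n k : ℕ} {S : Finset ℕ} (hS : S ∈ Sset n k) : FT n k S ∈ Sset n k := by
  have hc := (mem_Sset.1 hS).2
  apply (image_spec _ ?_ ?_).1
  · intro i j h1 hij h2
    by_cases hi : i ∈ OutS n k S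
    · rw [if_pos hi]
      obtain ⟨⟨hi1, hi2⟩, hp, hg⟩ := mem_OutS.1 hi
      rw [nxt_eq hS] at hg
      have hik : ¬ i = k := by omega
      rw [if_neg hik] at hg
      have h4 : elt S (i + 1) ≤ elt S j := elt_le hc (by omega) (by omega) h2
      have : elt S i + 1 < elt S j := by omega
      split <;> omega
    · rw [if_neg hi]
      have := elt_lt hc h1 hij h2
      split <;> omega
  · intro i h1 h2
    have hb := elt_bounds hS h1 h2
    by_cases hi : i ∈ OutS n k S
    · rw [if_pos hi]
      obtain ⟨⟨hi1, hi2⟩, hp, hg⟩ := mem_OutS.1 hi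
      rw [nxt_eq hS] at hg
      by_cases hik : i = k
      · rw [if_pos hik] at hg; omega
      · rw [if_neg hik] at hg
        have := (elt_bounds hS (by omega : 1 ≤ i + 1) (by omega)).2
        omega
    · rw [if_neg hi]; exact hb

lemma FT_of_out_empty {n k : ℕ} {S : Finset ℕ} (hS : S ∈ Sset n k)
    (h : OutS n k S = ∅) : FT n k S = S := by
  rw [FT, h]
  simp only [Finset.notMem_empty, if_false]
  exact image_elt hS

lemma FT_Sr {n k r : ℕ} {S : Finset ℕ} (hS : S ∈ Sset n k) (hr : r ∈ OutS n k S) :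
    FT n k (Sr S r) = FT n k S := by
  obtain ⟨⟨hr1, hr2⟩, hpar, hgap⟩ := mem_OutS.1 hr
  obtain ⟨hmem, hOut⟩ := Out_Sr hS hr
  obtain ⟨_, helt⟩ := Sr_spec hS hr1 hr2 hgap
  apply Finset.image_congr
  intro i hi
  rw [Finset.coe_Icc, Set.mem_Icc] at hi
  simp only [hOut, helt i hi.1 hi.2]
  by_cases hir : i = r
  · subst hir
    rw [if_pos rfl, if_neg (by simp), if_pos hr]
  · rw [if_neg hir]
    by_cases h : i ∈ OutS n k S
    · rw [if_pos (Finset.mem_erase.2 ⟨hir, h⟩), if_pos h]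
    · rw [if_neg (fun hc => h (Finset.mem_erase.1 hc).2), if_neg h]

lemma odd_iff_par {k e : ℕ} : Odd ((k : ℤ) - e) ↔ ¬ (e % 2 = k % 2) := by
  rw [Int.odd_iff]
  omega

lemma step_of_out {n k r : ℕ} {S : Finset ℕ} (hr : r ∈ OutS n k S) : AdmStep n k S (Sr S r) := by
  obtain ⟨⟨hr1, hr2⟩, hpar, hgap⟩ := mem_OutS.1 hr
  exact ⟨r, hr1, hr2, by omega, odd_iff_par.2 hpar, rfl⟩

lemma out_of_step {n k : ℕ} {S T : Finset ℕ} (hS : S ∈ Sset n k) (h : AdmStep n k S T) :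
    ∃ r ∈ OutS n k S, T = Sr S r := by
  obtain ⟨r, hr1, hr2, hgap, hodd, rfl⟩ := h
  exact ⟨r, mem_OutS.2 ⟨⟨hr1, hr2⟩, odd_iff_par.1 hodd, by omega⟩, rfl⟩

lemma main_ind {n k : ℕ} : ∀ m (S : Finset ℕ), S ∈ Sset n k → (OutS n k S).card = m →
    OutS n k (FT n k S) = ∅ ∧ AdmLE n k S (FT n k S) := by
  intro m
  induction m with
  | zero =>
    intro S hS hcard
    have h0 : OutS n k S = ∅ := Finset.card_eq_zero.1 hcard
    rw [FT_of_out_empty hS h0]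
    exact ⟨h0, Relation.ReflTransGen.refl⟩
  | succ m ih =>
    intro S hS hcard
    have hne : (OutS n k S).Nonempty := Finset.card_pos.1 (by omega)
    obtain ⟨r, hr⟩ := hne
    obtain ⟨hmem, hOut⟩ := Out_Sr hS hr
    have hcard' : (OutS n k (Sr S r)).card = m := by
      rw [hOut, Finset.card_erase_of_mem hr, hcard]; omega
    obtain ⟨h1, h2⟩ := ih (Sr S r) hmem hcard'
    rw [FT_Sr hS hr] at h1 h2
    exact ⟨h1, Relation.ReflTransGen.head (step_of_out hr) h2⟩

lemma adm_inv {n k : ℕ} {S T : Finset ℕ} (h : AdmLE n k S T) (hS : S ∈ Sset n k) :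
    T ∈ Sset n k ∧ FT n k T = FT n k S := by
  induction h with
  | refl => exact ⟨hS, rfl⟩
  | tail hab hbc ih =>
    obtain ⟨hb, hft⟩ := ih
    obtain ⟨r, hr, rfl⟩ := out_of_step hb hbc
    exact ⟨(Out_Sr hb hr).1, (FT_Sr hb hr).trans hft⟩

/-- for every `T ∈ {n;k}` there is a unique `S ∈ {n;k}` with `Out(S) = ∅` and
`T ≤_adm S`; explicitly, `S` is obtained from `T` by increasing `t_i` by one exactly
for `i ∈ Out(T)`. -/
theorem stmt9 (n k : ℕ) (hk : k ≤ n) (T : Finset ℕ) (hT : T ∈ Sset n k) :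
    (∃! S, S ∈ Sset n k ∧ OutS n k S = ∅ ∧ AdmLE n k T S) ∧
    (∀ S, (S ∈ Sset n k ∧ OutS n k S = ∅ ∧ AdmLE n k T S) →
      S = (Finset.Icc 1 k).image fun i =>
            if i ∈ OutS n k T then elt T i + 1 else elt T i) := by
  have hFT := FT_mem hT
  obtain ⟨hOut, hLE⟩ := main_ind (OutS n k T).card T hT rfl
  have huniq : ∀ S, (S ∈ Sset n k ∧ OutS n k S = ∅ ∧ AdmLE n k T S) → S = FT n k T := by
    rintro S ⟨hS, hO, hL⟩
    have h := adm_inv hL hT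
    rw [← FT_of_out_empty hS hO, h.2]
  exact ⟨⟨FT n k T, ⟨hFT, hOut, hLE⟩, huniq⟩, fun S h => huniq S h⟩
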